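/- Let p1, p2 ∈ [0,1], λ1, λ2 ≥ 0 and i1, i2 ∈ ℕ. Define for (Δ1,Δ2,Δ3) ∈ ℤ³ the intra-session transition probability conditioned on flow 1 being serviced: 𝒫(Δ1,Δ2,Δ3) = a(λ2,1,Δ3) · P₀(Δ1,Δ2 | (i1,i2)), where P₀ denotes the genie-aided inter-session transition probability with λ2 replaced by 0, i.e., P₀(Δ1,Δ2 | (i1,i2)) = d0(i1,p1)·a(λ1,1,Δ1)·( d0(i2,p2)·a(0,1,Δ2) + d1(i2,p2)·a(0,1,Δ2+1) ) + d1(i1,p1)·a(λ1,1,Δ1+1)·( d0(i2,p2)·a(0,1,Δ2−1) + d1(i2,p2)·a(0,1,Δ2) ). Then for all real z1, z2, z3 > 0 the family (𝒫(Δ1,Δ2,Δ3)·z1^{Δ1}·z2^{Δ2}·z3^{Δ3}) indexed by ℤ³ is summable and Σ_{(Δ1,Δ2,Δ3)∈ℤ³} 𝒫(Δ1,Δ2,Δ3)·z1^{Δ1}·z2^{Δ2}·z3^{Δ3} = exp(λ1·(z1−1)) · exp(λ2·(z3−1)) · (d0(i2,p2) + d1(i2,p2)·z2^{−1}) · (d0(i1,p1)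 + d1(i1,p1)·z2·z1^{−1}). -/

import Mathlib

/-- Probability that `x` packets arrive in `b` time slots under a Poisson
arrival process of rate `lam` per slot. -/
noncomputable def arr (lam : ℝ) (b : ℕ) (x : ℤ) : ℝ :=
  if 0 ≤ x then Real.exp (-(lam * b)) * (lam * b) ^ x.toNat / (Nat.factorial x.toNat) else 0

/-- Probability of zero successful transmissions in one slot when the queue holds `i` packets. -/
noncomputable def d0 (i : ℕ) (p : ℝ) : ℝ := if i = 0 then 1 else p

/-- Probability of one successful transmission in one slot when the queue holds `i` packets. -/
noncomputable def d1 (i : ℕ) (p : ℝ) : ℝ := if i = 0 then 0 else 1 - p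

/-- Genie-aided inter-session transition probability `P(Δ1, Δ2 | (i1, i2))`. -/
noncomputable def Ptrans (p1 p2 lam1 lam2 : ℝ) (i1 i2 : ℕ) (Δ : ℤ × ℤ) : ℝ :=
  d0 i1 p1 * arr lam1 1 Δ.1 *
      (d0 i2 p2 * arr lam2 1 Δ.2 + d1 i2 p2 * arr lam2 1 (Δ.2 + 1)) +
    d1 i1 p1 * arr lam1 1 (Δ.1 + 1) *
      (d0 i2 p2 * arr lam2 1 (Δ.2 - 1) + d1 i2 p2 * arr lam2 1 Δ.2)

/-- Intra-session transition probability conditioned on flow 1 being serviced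
(event `A1`): `𝒫(Δ1,Δ2,Δ3) = a(λ2,1,Δ3) · P(Δ1,Δ2 | (i1,i2))|_{λ2 = 0}`. -/
noncomputable def PintraA1 (p1 p2 lam1 lam2 : ℝ) (i1 i2 : ℕ) (Δ : ℤ × ℤ × ℤ) : ℝ :=
  arr lam2 1 Δ.2.2 * Ptrans p1 p2 lam1 0 i1 i2 (Δ.1, Δ.2.1)


/-!
The generating function factorises. Poisson arrivals have generating function `exp (λ (z - 1))`,
and a successful transmission shifts a coordinate by one, which multiplies the generating
function by the corresponding `z⁻¹` (a flow-1 packet leaving `S1` enters `S2`, hence the factor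
`z2 * z1⁻¹`). Every series involved converges absolutely, so the sum over `ℤ³` is a product of
one-dimensional sums.
-/

open Real

theorem HasSum.mul_real {ι κ : Type*} {f : ι → ℝ} {g : κ → ℝ} {s t : ℝ}
    (hf : HasSum f s) (hg : HasSum g t) :
    HasSum (fun x : ι × κ => f x.1 * g x.2) (s * t) :=
  hf.mul hg (summable_mul_of_summable_norm (by simpa using hf.summable.abs)
    (by simpa using hg.summable.abs))

theorem HasSum.comp_add_right_mul_zpow {K : Type*} [Field K] [TopologicalSpace K]
    [IsTopologicalRing K] {f : ℤ → K} {z s : K} (hz : z ≠ 0)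
    (h : HasSum (fun x => f x * z ^ x) s) (k : ℤ) :
    HasSum (fun x => f (x + k) * z ^ x) (s * z ^ (-k)) := by
  have hshift : (fun x => f (x + k) * z ^ x) ∘ Equiv.subRight k =
      fun x => f x * z ^ x * z ^ (-k) := by
    funext x
    simp [mul_assoc, zpow_add₀ hz, sub_eq_add_neg]
  exact (Equiv.subRight k).hasSum_iff.mp (hshift ▸ h.mul_right _)

theorem hasSum_arr_mul_zpow (lam : ℝ) (b : ℕ) (z : ℝ) :
    HasSum (fun x : ℤ => arr lam b x * z ^ x) (exp (lam * b * (z - 1))) := by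
  have hexp : HasSum (fun n : ℕ => exp (-(lam * b)) * ((lam * b * z) ^ n / n.factorial))
      (exp (lam * b * (z - 1))) := by
    have h := (NormedSpace.expSeries_div_hasSum_exp (lam * b * z)).mul_left (exp (-(lam * b)))
    rwa [← exp_eq_exp_ℝ, ← exp_add, show -(lam * b) + lam * b * z = lam * b * (z - 1) by ring]
      at h
  have hsupp : ∀ x ∉ Set.range ((↑) : ℕ → ℤ), arr lam b x * z ^ x = 0 := by
    intro x hx
    have hneg : ¬ 0 ≤ x := fun h => hx ⟨x.toNat, Int.toNat_of_nonneg h⟩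
    simp [arr, hneg]
  refine (Nat.cast_injective.hasSum_iff hsupp).mp ?_
  convert hexp using 2 with n
  simp only [Function.comp, arr, Int.natCast_nonneg, if_true, Int.toNat_natCast, zpow_natCast]
  ring

theorem hasSum_Ptrans_mul_zpow (p1 p2 lam1 lam2 : ℝ) (i1 i2 : ℕ) {z1 z2 : ℝ}
    (hz1 : z1 ≠ 0) (hz2 : z2 ≠ 0) :
    HasSum (fun Δ : ℤ × ℤ => Ptrans p1 p2 lam1 lam2 i1 i2 Δ * z1 ^ Δ.1 * z2 ^ Δ.2)
      (exp (lam1 * (z1 - 1)) * exp (lam2 * (z2 - 1)) *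
        (d0 i2 p2 + d1 i2 p2 * z2⁻¹) * (d0 i1 p1 + d1 i1 p1 * z2 * z1⁻¹)) := by
  have hA1 := hasSum_arr_mul_zpow lam1 1 z1
  have hA2 := hasSum_arr_mul_zpow lam2 1 z2
  have hidle := (hA1.mul_left (d0 i1 p1)).mul_real
    ((hA2.mul_left (d0 i2 p2)).add ((hA2.comp_add_right_mul_zpow hz2 1).mul_left (d1 i2 p2)))
  have hsent := ((hA1.comp_add_right_mul_zpow hz1 1).mul_left (d1 i1 p1)).mul_real
    (((hA2.comp_add_right_mul_zpow hz2 (-1)).mul_left (d0 i2 p2)).add (hA2.mul_left (d1 i2 p2)))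
  convert hidle.add hsent using 1
  · funext Δ
    simp only [Ptrans, sub_eq_add_neg]
    ring
  · simp only [Nat.cast_one, mul_one, zpow_one, zpow_neg, inv_inv]
    field_simp

theorem intra_session_A1_pgf_general (p1 p2 lam1 lam2 : ℝ) (i1 i2 : ℕ)
    (z1 z2 z3 : ℝ) (hz1 : 0 < z1) (hz2 : 0 < z2) :
    HasSum
      (fun Δ : ℤ × ℤ × ℤ =>
        PintraA1 p1 p2 lam1 lam2 i1 i2 Δ * z1 ^ Δ.1 * z2 ^ Δ.2.1 * z3 ^ Δ.2.2)
      (Real.exp (lam1 * (z1 - 1)) * Real.exp (lam2 * (z3 - 1)) *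
        (d0 i2 p2 + d1 i2 p2 * z2⁻¹) * (d0 i1 p1 + d1 i1 p1 * z2 * z1⁻¹)) := by
  have h := HasSum.mul_real (hasSum_Ptrans_mul_zpow p1 p2 lam1 0 i1 i2 hz1.ne' hz2.ne')
    (hasSum_arr_mul_zpow lam2 1 z3)
  convert (Equiv.prodAssoc ℤ ℤ ℤ).symm.hasSum_iff.mpr h using 1
  · funext Δ
    simp only [Function.comp, Equiv.prodAssoc_symm_apply, PintraA1]
    ring
  · simp only [zero_mul, exp_zero, Nat.cast_one, mul_one]
    ring

/-- PGF of the intra-session transition probability conditioned on flow 1 being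
serviced. -/
theorem intra_session_A1_pgf (p1 p2 lam1 lam2 : ℝ)
    (hp1 : p1 ∈ Set.Icc (0 : ℝ) 1) (hp2 : p2 ∈ Set.Icc (0 : ℝ) 1)
    (hl1 : 0 ≤ lam1) (hl2 : 0 ≤ lam2) (i1 i2 : ℕ)
    (z1 z2 z3 : ℝ) (hz1 : 0 < z1) (hz2 : 0 < z2) (hz3 : 0 < z3) :
    HasSum
      (fun Δ : ℤ × ℤ × ℤ =>
        PintraA1 p1 p2 lam1 lam2 i1 i2 Δ * z1 ^ Δ.1 * z2 ^ Δ.2.1 * z3 ^ Δ.2.2)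
      (Real.exp (lam1 * (z1 - 1)) * Real.exp (lam2 * (z3 - 1)) *
        (d0 i2 p2 + d1 i2 p2 * z2⁻¹) * (d0 i1 p1 + d1 i1 p1 * z2 * z1⁻¹)) :=
  intra_session_A1_pgf_general p1 p2 lam1 lam2 i1 i2 z1 z2 z3 hz1 hz2
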